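/- Let M > 0, Q ≠ 0 and s ∈ (0,1] satisfy 8Q² < 9sM² (so β > 0), and let Λ = Λ₊. Then the largest positive root a of P(·,s) is a double root at which P has a local minimum: P(a,s) = 0, P'(a,s) = 0 and P''(a,s) > 0. -/
import Mathlib


noncomputable section

/-- The quartic polynomial `P(r,s) = sL/3*r^4 - r^2 + 2sM*r - sQ^2` (case `Q != 0`). -/
def P (M Q Λ s r : ℝ) : ℝ := s * Λ / 3 * r ^ 4 - r ^ 2 + 2 * s * M * r - s * Q ^ 2

/-- First derivative of `P` with respect to `r`. -/
def P' (M Q Λ s r : ℝ) : ℝ := 4 * s * Λ / 3 * r ^ 3 - 2 * r + 2 * s * M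

/-- Second derivative of `P` with respect to `r`. -/
def P'' (M Q Λ s r : ℝ) : ℝ := 4 * s * Λ * r ^ 2 - 2

/-- `Λ₋`, defined for `β := 9sM² − 8Q² ≥ 0`. -/
def Λminus (M Q s : ℝ) : ℝ :=
  1 / (32 * s ^ 2 * Q ^ 6) *
    (8 * Q ^ 4 - (9 * s * M ^ 2 - 8 * Q ^ 2) * (9 * s * M ^ 2 - 8 * Q ^ 2 + 4 * Q ^ 2)
      - 3 * Real.sqrt (s * M ^ 2 * (9 * s * M ^ 2 - 8 * Q ^ 2) ^ 3))

/-- `Λ₊`, defined for `β := 9sM² − 8Q² ≥ 0`. -/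
def Λplus (M Q s : ℝ) : ℝ :=
  1 / (32 * s ^ 2 * Q ^ 6) *
    (8 * Q ^ 4 - (9 * s * M ^ 2 - 8 * Q ^ 2) * (9 * s * M ^ 2 - 8 * Q ^ 2 + 4 * Q ^ 2)
      + 3 * Real.sqrt (s * M ^ 2 * (9 * s * M ^ 2 - 8 * Q ^ 2) ^ 3))

/-- At `Λ = Λ₊` (with M > 0, Q ≠ 0, 8Q² < 9sM²), the largest positive root of `P(·,s)` is
a double root at which `P` has a local minimum. -/
theorem largest_root_double_at_Lambda_plus (M Q s : ℝ)
    (hM : 0 < M) (hQ : Q ≠ 0) (hs0 : 0 < s) (hs1 : s ≤ 1)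
    (hβ : 8 * Q ^ 2 < 9 * s * M ^ 2) :
    ∃ a : ℝ, 0 < a ∧
      (∀ r : ℝ, 0 < r → P M Q (Λplus M Q s) s r = 0 → r ≤ a) ∧
      P M Q (Λplus M Q s) s a = 0 ∧
      P' M Q (Λplus M Q s) s a = 0 ∧
      0 < P'' M Q (Λplus M Q s) s a := by
  have hβ' : 0 < 9 * s * M ^ 2 - 8 * Q ^ 2 := by linarith
  have hQ2 : 0 < Q ^ 2 := by positivity
  set t : ℝ := Real.sqrt (s * (9 * s * M ^ 2 - 8 * Q ^ 2)) with htdef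
  have ht2 : t ^ 2 = s * (9 * s * M ^ 2 - 8 * Q ^ 2) := Real.sq_sqrt (by positivity)
  have ht0 : 0 < t := Real.sqrt_pos.mpr (by positivity)
  have hsqrt : Real.sqrt (s * M ^ 2 * (9 * s * M ^ 2 - 8 * Q ^ 2) ^ 3)
      = M * (9 * s * M ^ 2 - 8 * Q ^ 2) * t := by
    rw [show s * M ^ 2 * (9 * s * M ^ 2 - 8 * Q ^ 2) ^ 3
        = (M * (9 * s * M ^ 2 - 8 * Q ^ 2) * t) ^ 2 by
      linear_combination (-(M ^ 2 * (9 * s * M ^ 2 - 8 * Q ^ 2) ^ 2)) * ht2]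
    exact Real.sqrt_sq (by positivity)
  set L : ℝ := 6 * (s * M + t) / (s * (3 * s * M + t) ^ 3) with hLdef
  have hden : (s * (3 * s * M + t) ^ 3) ≠ 0 := by positivity
  have hL : Λplus M Q s = L := by
    rw [Λplus, hsqrt, hLdef, eq_div_iff hden, one_div, inv_mul_eq_div,
      div_mul_eq_mul_div, div_eq_iff (by positivity : (32 * s ^ 2 * Q ^ 6 : ℝ) ≠ 0)]
    linear_combination ((-24)*s*Q^4*t + (-24)*s*M*Q^2*t^2 + (-24)*s^2*M*Q^4 + (-108)*s^2*M^2*Q^2*t + (27)*s^2*M^3*t^2 + (-108)*s^3*M^3*Q^2 + (162)*s^3*M^4*t + (243)*s^4*M^5) * ht2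
  have hLpos : 0 < L := by rw [hLdef]; positivity
  set a : ℝ := (3 * s * M + t) / 2 with hadef
  have ha0 : 0 < a := by positivity
  have hPa : P M Q L s a = 0 := by
    rw [P, hadef, hLdef]
    have h1 : s * (6 * (s * M + t) / (s * (3 * s * M + t) ^ 3)) / 3
        * ((3 * s * M + t) / 2) ^ 4 = (s * M + t) * (3 * s * M + t) / 8 := by
      field_simp; ring
    rw [h1]
    linear_combination (-(1:ℝ)/8) * ht2
  have hP'a : P' M Q L s a = 0 := by
    rw [P', hadef, hLdef]
    field_simp
    ring
  have hP''a : P'' M Q L s a = 4 * t / (3 * s * M + t) := by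
    rw [P'', hadef, hLdef]
    field_simp
    ring
  have hP''pos : 0 < P'' M Q L s a := by rw [hP''a]; positivity
  refine ⟨a, ha0, ?_, by rw [hL]; exact hPa, by rw [hL]; exact hP'a, by rw [hL]; exact hP''pos⟩
  intro r hr hPr
  rw [hL] at hPr
  by_contra hcon
  push_neg at hcon
  have hd : 0 < r - a := by linarith
  have hkey : P M Q L s r = (r - a) ^ 2 *
      ((4 * s * L * a ^ 2 - 2) / 2 + 4 * s * L * a / 3 * (r - a) + s * L / 3 * (r - a) ^ 2) := by
    rw [P]; rw [P] at hPa; rw [P'] at hP'a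
    linear_combination hPa + (r - a) * hP'a
  have hc0 : 0 < (4 * s * L * a ^ 2 - 2) / 2 := by
    rw [P''] at hP''pos; linarith
  have hc1 : 0 < 4 * s * L * a / 3 * (r - a) := by positivity
  have hc2 : 0 ≤ s * L / 3 * (r - a) ^ 2 := by positivity
  have : 0 < P M Q L s r := by
    rw [hkey]
    have hsum : 0 < (4 * s * L * a ^ 2 - 2) / 2 + 4 * s * L * a / 3 * (r - a)
        + s * L / 3 * (r - a) ^ 2 := by linarith
    exact mul_pos (by positivity) hsum
  linarith [hPr, this]
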